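/- arXiv:2502.10225 — 2 statements merged into one kernel-verified Lean document; each statement's English description precedes it below -/
import Mathlib

section
/- There is a universal constant C > 0 with the following property. Let 0 < r < R, let A_{r,R} = {x ∈ ℝ² : r < |x| < R}, and let u be a C¹ function on the closed annulus {x : r ≤ |x| ≤ R} that vanishes on the inner circle {|x| = r}. Then ∫_{A_{r,R}} u² dA ≤ C · R² · log(R/r) · ∫_{A_{r,R}} |∇u|² dA. -/
/-! Along each ray `t ↦ t • e` leaving the inner circle, `u (ρ • e) = ∫_r^ρ ∂ₜ u (t • e) dt`, and
Cauchy–Schwarz against the weights `t^(-1/2)` and `t^(1/2)` gives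
`u (ρ • e)^2 ≤ log (R / r) * ∫_r^R t ‖Du (t • e)‖² dt`. Multiplying by `ρ` and integrating over
`ρ ∈ (r, R)` and over the angle, i.e. over the annulus in polar coordinates, yields the estimate
with `C = 1/2`, because `∫_r^R ρ dρ ≤ R^2 / 2`. -/

open MeasureTheory Metric Real

noncomputable section

local notation "E2" => EuclideanSpace ℝ (Fin 2)

open Set

theorem sq_integral_mul_le_integral_sq_mul_integral_sq {α : Type*} [MeasurableSpace α]
    {μ : Measure α} {f g : α → ℝ} (hf : MemLp f 2 μ) (hg : MemLp g 2 μ) :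
    (∫ a, f a * g a ∂μ) ^ 2 ≤ (∫ a, f a ^ 2 ∂μ) * ∫ a, g a ^ 2 ∂μ := by
  have inner_eq {φ ψ : α → ℝ} (hφ : MemLp φ 2 μ) (hψ : MemLp ψ 2 μ) :
      inner ℝ (hφ.toLp φ) (hψ.toLp ψ) = ∫ a, φ a * ψ a ∂μ := by
    rw [L2.inner_def]
    refine integral_congr_ae ?_
    filter_upwards [hφ.coeFn_toLp, hψ.coeFn_toLp] with a hφa hψa
    rw [hφa, hψa, real_inner_eq_re_inner, RCLike.inner_apply, conj_trivial, mul_comm]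
    rfl
  simpa only [inner_eq, sq] using real_inner_mul_inner_self_le (hf.toLp f) (hg.toLp g)

theorem sq_le_log_div_mul_integral_mul_sq {f f' : ℝ → ℝ} {r ρ : ℝ} (hr : 0 < r) (hrρ : r ≤ ρ)
    (hf : ∀ t ∈ Icc r ρ, HasDerivAt f (f' t) t) (hf' : ContinuousOn f' (Icc r ρ))
    (h0 : f r = 0) :
    f ρ ^ 2 ≤ log (ρ / r) * ∫ t in r..ρ, t * f' t ^ 2 := by
  have memLp_two {g : ℝ → ℝ} (hg : ContinuousOn g (Icc r ρ)) :
      MemLp g 2 (volume.restrict (Ioc r ρ)) :=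
    (memLp_two_iff_integrable_sq ((hg.mono Ioc_subset_Icc_self).aestronglyMeasurable
      measurableSet_Ioc)).2 ((hg.pow 2).integrableOn_Icc.mono_set Ioc_subset_Icc_self)
  have hsqrt : ContinuousOn (fun t => √t) (Icc r ρ) := continuous_sqrt.continuousOn
  have hsqrt_ne : ∀ t ∈ Icc r ρ, √t ≠ 0 := fun t ht => (sqrt_pos.2 (hr.trans_le ht.1)).ne'
  have ftc : f ρ = ∫ t in r..ρ, (√t)⁻¹ * (√t * f' t) := by
    rw [← sub_zero (f ρ), ← h0, ← intervalIntegral.integral_eq_sub_of_hasDerivAt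
      (fun t ht => hf t (uIcc_of_le hrρ ▸ ht)) (hf'.intervalIntegrable_of_Icc hrρ)]
    refine intervalIntegral.integral_congr fun t ht => ?_
    rw [inv_mul_cancel_left₀ (hsqrt_ne t (uIcc_of_le hrρ ▸ ht))]
  have cauchy_schwarz := sq_integral_mul_le_integral_sq_mul_integral_sq
    (memLp_two (hsqrt.inv₀ hsqrt_ne)) (memLp_two (hsqrt.mul hf'))
  rw [← intervalIntegral.integral_of_le hrρ, ← intervalIntegral.integral_of_le hrρ,
    ← intervalIntegral.integral_of_le hrρ] at cauchy_schwarz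
  have weight : ∫ t in r..ρ, (√t)⁻¹ ^ 2 = log (ρ / r) := by
    rw [← integral_inv_of_pos hr (hr.trans_le hrρ)]
    refine intervalIntegral.integral_congr fun t ht => ?_
    rw [inv_pow, sq_sqrt (hr.le.trans (uIcc_of_le hrρ ▸ ht).1)]
  have weighted : ∫ t in r..ρ, (√t * f' t) ^ 2 = ∫ t in r..ρ, t * f' t ^ 2 := by
    refine intervalIntegral.integral_congr fun t ht => ?_
    rw [mul_pow, sq_sqrt (hr.le.trans (uIcc_of_le hrρ ▸ ht).1)]
  rwa [ftc, ← weight, ← weighted]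

theorem sq_apply_smul_le_log_mul_integral {E : Type*} [NormedAddCommGroup E] [NormedSpace ℝ E]
    {u : E → ℝ} (hu : ContDiff ℝ 1 u) {e : E} (he : ‖e‖ ≤ 1) {r R ρ : ℝ} (hr : 0 < r)
    (hρ : ρ ∈ Icc r R) (h0 : u (r • e) = 0) :
    u (ρ • e) ^ 2 ≤ log (R / r) * ∫ t in r..R, t * ‖fderiv ℝ u (t • e)‖ ^ 2 := by
  have hderiv (t : ℝ) : HasDerivAt (fun s : ℝ => u (s • e)) (fderiv ℝ u (t • e) e) t :=
    ((hu.differentiable one_ne_zero _).hasFDerivAt).comp_hasDerivAt t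
      (by simpa using (hasDerivAt_id t).smul_const e)
  have hD : Continuous fun t : ℝ => fderiv ℝ u (t • e) :=
    (hu.continuous_fderiv one_ne_zero).comp (continuous_id.smul continuous_const)
  have hDe : Continuous fun t : ℝ => fderiv ℝ u (t • e) e := hD.clm_apply continuous_const
  have hle (t : ℝ) (ht : 0 ≤ t) :
      t * fderiv ℝ u (t • e) e ^ 2 ≤ t * ‖fderiv ℝ u (t • e)‖ ^ 2 := by
    refine mul_le_mul_of_nonneg_left ?_ ht
    rw [← sq_abs, ← Real.norm_eq_abs]
    gcongr
    exact ((fderiv ℝ u (t • e)).le_opNorm e).trans (mul_le_of_le_one_right (norm_nonneg _) he)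
  have hint (a b : ℝ) : IntervalIntegrable (fun t => t * ‖fderiv ℝ u (t • e)‖ ^ 2) volume a b :=
    (continuous_id.mul (hD.norm.pow 2)).intervalIntegrable a b
  have hmono : ∫ t in r..ρ, t * fderiv ℝ u (t • e) e ^ 2 ≤
      ∫ t in r..R, t * ‖fderiv ℝ u (t • e)‖ ^ 2 :=
    (intervalIntegral.integral_mono_on hρ.1 ((continuous_id.mul (hDe.pow 2)).intervalIntegrable _ _)
        (hint r ρ) fun t ht => hle t (hr.le.trans ht.1)).trans
      (intervalIntegral.integral_mono_interval le_rfl hρ.1 hρ.2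
        ((ae_restrict_iff' measurableSet_Ioc).2 (ae_of_all _ fun t ht =>
          by have := hr.trans ht.1; positivity)) (hint r R))
  calc u (ρ • e) ^ 2 ≤ log (ρ / r) * ∫ t in r..ρ, t * fderiv ℝ u (t • e) e ^ 2 :=
        sq_le_log_div_mul_integral_mul_sq hr hρ.1 (fun t _ => hderiv t) hDe.continuousOn
          (by simpa using h0)
    _ ≤ log (R / r) * ∫ t in r..R, t * ‖fderiv ℝ u (t • e)‖ ^ 2 :=
        mul_le_mul (log_le_log (div_pos (hr.trans_le hρ.1) hr) (by gcongr; exact hρ.2)) hmono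
          (intervalIntegral.integral_nonneg hρ.1 fun t ht => by
            have := hr.trans_le ht.1; positivity)
          (log_nonneg ((one_le_div hr).2 (hρ.1.trans hρ.2)))

theorem setIntegral_Ioo_prod_Ioo_le {F k : ℝ × ℝ → ℝ} {a b c d L : ℝ} (hab : a ≤ b)
    (hF : Continuous F) (hk : Continuous k)
    (h : ∀ p ∈ Ioo a b ×ˢ Ioo c d, F p ≤ L * p.1 * ∫ t in a..b, k (t, p.2)) :
    ∫ p in Ioo a b ×ˢ Ioo c d, F p ≤
      L * ((b ^ 2 - a ^ 2) / 2) * ∫ p in Ioo a b ×ˢ Ioo c d, k p := by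
  have integrableOn {f : ℝ × ℝ → ℝ} (hf : Continuous f) (a b c d : ℝ) :
      IntegrableOn f (Ioo a b ×ˢ Ioo c d) :=
    (hf.continuousOn.integrableOn_compact (isCompact_Icc.prod isCompact_Icc)).mono_set
      (prod_mono Ioo_subset_Icc_self Ioo_subset_Icc_self)
  have hG : Continuous fun θ => ∫ t in a..b, k (t, θ) :=
    intervalIntegral.continuous_parametric_intervalIntegral_of_continuous'
      (f := fun θ t => k (t, θ)) (hk.comp continuous_swap) a b
  have fubini : ∫ p in Ioo a b ×ˢ Ioo c d, k p = ∫ θ in Ioo c d, ∫ t in a..b, k (t, θ) := by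
    rw [Measure.volume_eq_prod, ← setIntegral_prod_swap, setIntegral_prod]
    · simp_rw [intervalIntegral.integral_of_le hab, integral_Ioc_eq_integral_Ioo]
      rfl
    · rw [← Measure.volume_eq_prod]
      exact integrableOn (hk.comp continuous_swap) c d a b
  calc ∫ p in Ioo a b ×ˢ Ioo c d, F p
      ≤ ∫ p in Ioo a b ×ˢ Ioo c d, L * p.1 * ∫ t in a..b, k (t, p.2) :=
        setIntegral_mono_on (integrableOn hF a b c d)
          (integrableOn ((continuous_const.mul continuous_fst).mul (hG.comp continuous_snd))
            a b c d)
          (measurableSet_Ioo.prod measurableSet_Ioo) h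
    _ = (∫ t in Ioo a b, L * t) * ∫ θ in Ioo c d, ∫ t in a..b, k (t, θ) := by
        rw [Measure.volume_eq_prod, ← setIntegral_prod_mul (fun t => L * t)]
    _ = L * ((b ^ 2 - a ^ 2) / 2) * ∫ p in Ioo a b ×ˢ Ioo c d, k p := by
        rw [fubini, integral_const_mul, ← integral_Ioc_eq_integral_Ioo,
          ← intervalIntegral.integral_of_le hab, integral_id]

def polarDir (θ : ℝ) : E2 := Complex.orthonormalBasisOneI.repr (circleMap 0 1 θ)

theorem norm_polarDir (θ : ℝ) : ‖polarDir θ‖ = 1 := by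
  simp [polarDir]

theorem continuous_polarDir : Continuous polarDir :=
  Complex.orthonormalBasisOneI.repr.continuous.comp (continuous_circleMap 0 1)

theorem repr_polarCoord_symm (p : ℝ × ℝ) :
    Complex.orthonormalBasisOneI.repr (Complex.polarCoord.symm p) = p.1 • polarDir p.2 := by
  rw [polarDir, ← map_smul, Complex.real_smul, circleMap_zero, Complex.exp_mul_I,
    ← Complex.ofReal_cos, ← Complex.ofReal_sin, Complex.polarCoord_symm_apply]
  simp

theorem setIntegral_annulus_eq_setIntegral_polar {r R : ℝ} (hr : 0 ≤ r) (w : E2 → ℝ) :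
    ∫ x in ball (0 : E2) R \ closedBall 0 r, w x =
      ∫ p in Ioo r R ×ˢ Ioo (-π) π, p.1 * w (p.1 • polarDir p.2) := by
  set A := ball (0 : E2) R \ closedBall 0 r
  have hA : MeasurableSet A := measurableSet_ball.diff measurableSet_closedBall
  have htarget : polarCoord.target ∩ (fun p : ℝ × ℝ => p.1 • polarDir p.2) ⁻¹' A =
      Ioo r R ×ˢ Ioo (-π) π := by
    ext ⟨t, θ⟩
    simp only [polarCoord_target, mem_inter_iff, mem_prod, mem_Ioi, mem_preimage, A, mem_sdiff,
      mem_ball_zero_iff, mem_closedBall_zero_iff, norm_smul, norm_polarDir, mul_one,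
      Real.norm_eq_abs, mem_Ioo]
    constructor
    · rintro ⟨⟨ht, hθ⟩, htR, htr⟩
      rw [abs_of_pos ht] at htR htr
      exact ⟨⟨not_le.1 htr, htR⟩, hθ⟩
    · rintro ⟨⟨hrt, htR⟩, hθ⟩
      have ht := hr.trans_lt hrt
      rw [abs_of_pos ht]
      exact ⟨⟨ht, hθ⟩, htR, not_le.2 hrt⟩
  rw [← integral_indicator hA,
    ← Complex.orthonormalBasisOneI.measurePreserving_measurableEquiv.integral_comp',
    ← Complex.integral_comp_polarCoord_symm]
  calc _ = ∫ p in polarCoord.target, ((fun p : ℝ × ℝ => p.1 • polarDir p.2) ⁻¹' A).indicator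
        (fun p => p.1 * w (p.1 • polarDir p.2)) p := by
        congr 1 with p
        rw [show Complex.orthonormalBasisOneI.measurableEquiv (Complex.polarCoord.symm p) =
          p.1 • polarDir p.2 from repr_polarCoord_symm p]
        by_cases hp : p.1 • polarDir p.2 ∈ A <;> simp [hp]
    _ = _ := by
      have hmeas : Measurable fun p : ℝ × ℝ => p.1 • polarDir p.2 :=
        (continuous_fst.smul (continuous_polarDir.comp continuous_snd)).measurable
      rw [setIntegral_indicator (hmeas hA), htarget]

theorem norm_gradient_eq_norm_fderiv {F : Type*} [NormedAddCommGroup F] [InnerProductSpace ℝ F]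
    [CompleteSpace F] (f : F → ℝ) (x : F) : ‖gradient f x‖ = ‖fderiv ℝ f x‖ := by
  rw [← toDual_gradient, LinearIsometryEquiv.norm_map]

theorem setIntegral_polar_mul_sq_le_log_mul {r R : ℝ} (hr : 0 < r) (hrR : r < R) {u : E2 → ℝ}
    (hu : ContDiff ℝ 1 u) (hu0 : ∀ θ, u (r • polarDir θ) = 0) :
    ∫ p in Ioo r R ×ˢ Ioo (-π) π, p.1 * u (p.1 • polarDir p.2) ^ 2 ≤
      log (R / r) * ((R ^ 2 - r ^ 2) / 2) *
        ∫ p in Ioo r R ×ˢ Ioo (-π) π, p.1 * ‖fderiv ℝ u (p.1 • polarDir p.2)‖ ^ 2 := by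
  have hpolar : Continuous fun p : ℝ × ℝ => p.1 • polarDir p.2 :=
    continuous_fst.smul (continuous_polarDir.comp continuous_snd)
  refine setIntegral_Ioo_prod_Ioo_le hrR.le
    (continuous_fst.mul ((hu.continuous.comp hpolar).pow 2))
    (continuous_fst.mul (((hu.continuous_fderiv one_ne_zero).comp hpolar).norm.pow 2))
    fun p hp => ?_
  rw [mul_comm _ p.1, mul_assoc]
  exact mul_le_mul_of_nonneg_left
    (sq_apply_smul_le_log_mul_integral hu (norm_polarDir p.2).le hr (Ioo_subset_Icc_self hp.1)
      (hu0 p.2)) (hr.trans hp.1.1).le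

/-- Lemma 4.1(iii): Poincaré-type inequality with logarithmic
constant on the annulus `{r < |x| < R}` in `ℝ²`, for `C¹` functions vanishing on
the inner circle `{|x| = r}`. -/
theorem annulus_poincare_estimate :
    ∃ C : ℝ, 0 < C ∧
      ∀ r R : ℝ, 0 < r → r < R →
        ∀ u : E2 → ℝ, ContDiff ℝ 1 u →
          (∀ x ∈ Metric.sphere (0 : E2) r, u x = 0) →
          (∫ x in Metric.ball (0 : E2) R \ Metric.closedBall (0 : E2) r, u x ^ 2) ≤
            C * R ^ 2 * Real.log (R / r) *
              ∫ x in Metric.ball (0 : E2) R \ Metric.closedBall (0 : E2) r,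
                ‖gradient u x‖ ^ 2 := by
  refine ⟨1 / 2, by norm_num, fun r R hr hrR u hu hu0 => ?_⟩
  simp_rw [norm_gradient_eq_norm_fderiv]
  have hlog : 0 ≤ log (R / r) := log_nonneg ((one_le_div hr).2 hrR.le)
  have hgrad : 0 ≤ ∫ x in ball (0 : E2) R \ closedBall 0 r, ‖fderiv ℝ u x‖ ^ 2 :=
    setIntegral_nonneg (measurableSet_ball.diff measurableSet_closedBall) fun _ _ => by positivity
  calc ∫ x in ball (0 : E2) R \ closedBall 0 r, u x ^ 2
      = ∫ p in Ioo r R ×ˢ Ioo (-π) π, p.1 * u (p.1 • polarDir p.2) ^ 2 :=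
        setIntegral_annulus_eq_setIntegral_polar hr.le _
    _ ≤ log (R / r) * ((R ^ 2 - r ^ 2) / 2) *
          ∫ x in ball (0 : E2) R \ closedBall 0 r, ‖fderiv ℝ u x‖ ^ 2 := by
        rw [setIntegral_annulus_eq_setIntegral_polar hr.le]
        exact setIntegral_polar_mul_sq_le_log_mul hr hrR hu fun θ =>
          hu0 _ (by simp [norm_smul, norm_polarDir, abs_of_pos hr])
    _ ≤ 1 / 2 * R ^ 2 * log (R / r) *
          ∫ x in ball (0 : E2) R \ closedBall 0 r, ‖fderiv ℝ u x‖ ^ 2 := by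
        rw [show 1 / 2 * R ^ 2 * log (R / r) = log (R / r) * (R ^ 2 / 2) by ring]
        gcongr
        linarith [sq_nonneg r]

end
end

section
/- Let T > 0 and let φ : ℝ × [0, T] → ℝ be a C² function that is harmonic (Δφ = 0) and 2π-periodic in the first variable. Then ∫_0^{2π} ∫_0^T φ(x, t)² dt dx ≤ (T/2) · ( ∫_0^{2π} φ(x, 0)² dx + ∫_0^{2π} φ(x, T)² dx ). In other words, on the flat cylinder S¹ × [0, T], the L² norm of a harmonic function is controlled by (T/2) times its boundary L² norm. -/
/-!
Let `f(t) = (Tt - t²)/2`, so `f'' = -1` and `f(0) = f(T) = 0`. For each `x`, integrating `φ²`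
against `-f''` by parts twice gives the error formula of the trapezoid rule:
`∫₀ᵀ φ² = (T/2)(φ(x,0)² + φ(x,T)²) - ∫₀ᵀ ∂ₜ²(φ²) f`.
So it suffices that `∫₀^{2π} ∫₀ᵀ ∂ₜ²(φ²) f ≥ 0`. Swap the integrals: since `f ≥ 0`, it is enough
that `∫₀^{2π} ∂ₜ²(φ²) dx ≥ 0` for every `t`. Harmonicity turns `∂ₜ²(φ²) = 2(∂ₜφ)² + 2φ∂ₜ²φ`
into `2(∂ₜφ)² - 2φ∂ₓ²φ`, and by periodicity in `x` the integral of `-φ∂ₓ²φ` is `∫(∂ₓφ)² ≥ 0`.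
-/

open MeasureTheory Real intervalIntegral Set Function
open scoped Interval

noncomputable section

def torsion (T t : ℝ) : ℝ := (T * t - t ^ 2) / 2

theorem hasDerivAt_torsion (T t : ℝ) : HasDerivAt (torsion T) (T / 2 - t) t :=
  (((hasDerivAt_id' t).const_mul T).sub (hasDerivAt_pow 2 t) |>.div_const 2).congr_deriv
    (by norm_num; ring)

@[simp]
theorem torsion_zero (T : ℝ) : torsion T 0 = 0 := by simp [torsion]

@[simp]
theorem torsion_self (T : ℝ) : torsion T T = 0 := by simp [torsion, sq]

theorem continuous_torsion (T : ℝ) : Continuous (torsion T) := by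
  unfold torsion; fun_prop

theorem torsion_nonneg {T t : ℝ} (ht : t ∈ Icc 0 T) : 0 ≤ torsion T t := by
  unfold torsion; nlinarith [ht.1, ht.2]

theorem integral_eq_trapezoid_sub_integral_mul_torsion {T : ℝ} (hT : 0 ≤ T) {w w' w'' : ℝ → ℝ}
    (hw : ∀ t ∈ Icc 0 T, HasDerivWithinAt w (w' t) (Icc 0 T) t)
    (hw' : ∀ t ∈ Icc 0 T, HasDerivWithinAt w' (w'' t) (Icc 0 T) t)
    (hw'' : ContinuousOn w'' (Icc 0 T)) :
    ∫ t in 0..T, w t = T / 2 * (w 0 + w T) - ∫ t in 0..T, w'' t * torsion T t := by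
  have hf : ContinuousOn (torsion T) (Icc 0 T) := (continuous_torsion T).continuousOn
  have hw_cont : ContinuousOn w (Icc 0 T) := fun t ht => (hw t ht).continuousWithinAt
  have hw'_cont : ContinuousOn w' (Icc 0 T) := fun t ht => (hw' t ht).continuousWithinAt
  -- `w' f - w f'` is a primitive of `w'' f + w`, since `f'' = -1`.
  have hprim : ∀ t ∈ Ioo 0 T, HasDerivAt (fun s => w' s * torsion T s - w s * (T / 2 - s))
      (w'' t * torsion T t + w t) t := by
    intro t ht
    have hIcc : Icc 0 T ∈ nhds t := Icc_mem_nhds ht.1 ht.2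
    have := ((hw' t (Ioo_subset_Icc_self ht)).hasDerivAt hIcc |>.mul (hasDerivAt_torsion T t)).sub
      ((hw t (Ioo_subset_Icc_self ht)).hasDerivAt hIcc |>.mul
        ((hasDerivAt_id' t).const_sub (T / 2)))
    exact this.congr_deriv (by ring)
  have hFTC := integral_eq_sub_of_hasDerivAt_of_le hT (by fun_prop) hprim
    ((hw''.mul hf |>.add hw_cont).intervalIntegrable_of_Icc hT)
  rw [integral_add (f := fun t => w'' t * torsion T t) ((hw''.mul hf).intervalIntegrable_of_Icc hT)
    (hw_cont.intervalIntegrable_of_Icc hT), torsion_zero, torsion_self] at hFTC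
  linear_combination hFTC

theorem Function.Periodic.deriv {v : ℝ → ℝ} {c : ℝ} (hv : Periodic v c) : Periodic (deriv v) c :=
  fun x => by simpa only [hv.funext] using (deriv_comp_add_const v c x).symm

theorem integral_mul_deriv_deriv_nonpos_of_periodic {v : ℝ → ℝ} {c : ℝ}
    (hv : Periodic v c) (hv2 : ContDiff ℝ 2 v) (hc : 0 ≤ c) :
    ∫ x in 0..c, v x * deriv (deriv v) x ≤ 0 := by
  have hv1 : ContDiff ℝ 1 (deriv v) := hv2.iterate_deriv' 1 1
  rw [integral_mul_deriv_eq_deriv_mul (fun x _ => (hv2.differentiable two_ne_zero x).hasDerivAt)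
      (fun x _ => (hv1.differentiable one_ne_zero x).hasDerivAt)
      (hv1.continuous.intervalIntegrable _ _)
      ((hv1.continuous_deriv le_rfl).intervalIntegrable _ _),
    ← zero_add c, hv 0, hv.deriv 0, zero_add, sub_self, zero_sub, neg_nonpos]
  exact integral_nonneg hc fun x _ => mul_self_nonneg _

theorem deriv_deriv_eq_of_hasDerivWithinAt_Icc {f f' : ℝ → ℝ} {f'' a b t : ℝ}
    (hf : ∀ s ∈ Icc a b, HasDerivWithinAt f (f' s) (Icc a b) s)
    (hf' : HasDerivWithinAt f' f'' (Icc a b) t) (ht : t ∈ Ioo a b) :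
    deriv (deriv f) t = f'' := by
  have hderiv : deriv f =ᶠ[nhds t] f' := by
    filter_upwards [Ioo_mem_nhds ht.1 ht.2] with s hs
    exact ((hf s (Ioo_subset_Icc_self hs)).hasDerivAt (Icc_mem_nhds hs.1 hs.2)).deriv
  rw [hderiv.deriv_eq]
  exact (hf'.hasDerivAt (Icc_mem_nhds ht.1 ht.2)).deriv

section Rectangle

variable {F : ℝ → ℝ → ℝ} {a b c d : ℝ}

theorem ContinuousOn.integrableOn_uIoc_prod (hF : ContinuousOn (uncurry F) ([[a, b]] ×ˢ [[c, d]])) :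
    IntegrableOn (uncurry F) (Ι a b ×ˢ Ι c d) :=
  (hF.integrableOn_compact (isCompact_uIcc.prod isCompact_uIcc)).mono_set
    (prod_mono uIoc_subset_uIcc uIoc_subset_uIcc)

theorem ContinuousOn.intervalIntegrable_intervalIntegral
    (hF : ContinuousOn (uncurry F) ([[a, b]] ×ˢ [[c, d]])) :
    IntervalIntegrable (fun x => ∫ t in c..d, F x t) volume a b := by
  have hint := hF.integrableOn_uIoc_prod
  rw [IntegrableOn, Measure.volume_eq_prod, ← Measure.prod_restrict] at hint
  rw [intervalIntegrable_iff]
  simp_rw [intervalIntegral_eq_integral_uIoc, smul_eq_mul]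
  exact hint.integral_prod_left.const_mul _

theorem intervalIntegral_intervalIntegral_nonneg_of_continuousOn (hcd : c ≤ d)
    (hF : ContinuousOn (uncurry F) ([[a, b]] ×ˢ [[c, d]]))
    (hpos : ∀ t ∈ Ioo c d, 0 ≤ ∫ x in a..b, F x t) :
    0 ≤ ∫ x in a..b, ∫ t in c..d, F x t := by
  rw [intervalIntegral_intervalIntegral_swap hF.integrableOn_uIoc_prod]
  refine integral_nonneg_of_ae_restrict hcd ?_
  rw [← Measure.restrict_congr_set Ioo_ae_eq_Icc]
  exact (ae_restrict_mem measurableSet_Ioo).mono hpos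

end Rectangle

/-- `∂ₜ g`, taken within `S` so that it is defined up to the boundary of a closed strip. -/
def partialDerivSnd (S : Set (ℝ × ℝ)) (g : ℝ × ℝ → ℝ) (p : ℝ × ℝ) : ℝ :=
  fderivWithin ℝ g S p (0, 1)

theorem DifferentiableOn.hasDerivWithinAt_partialDerivSnd {g : ℝ × ℝ → ℝ} {U I : Set ℝ}
    (hg : DifferentiableOn ℝ g (U ×ˢ I)) {x t : ℝ} (hx : x ∈ U) (ht : t ∈ I) :
    HasDerivWithinAt (fun s => g (x, s)) (partialDerivSnd (U ×ˢ I) g (x, t)) I t :=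
  (hg (x, t) ⟨hx, ht⟩).hasFDerivWithinAt.comp_hasDerivWithinAt t
    ((hasDerivAt_const t x).prodMk (hasDerivAt_id t)).hasDerivWithinAt fun _ hs => ⟨hx, hs⟩

theorem ContDiffOn.partialDerivSnd {n : WithTop ℕ∞} {g : ℝ × ℝ → ℝ} {S : Set (ℝ × ℝ)}
    (hg : ContDiffOn ℝ (n + 1) g S) (hS : UniqueDiffOn ℝ S) :
    ContDiffOn ℝ n (partialDerivSnd S g) S :=
  (hg.fderivWithin hS le_rfl).clm_apply contDiffOn_const


theorem ContDiffOn.contDiff_comp_prodMk_left {n : WithTop ℕ∞} {g : ℝ × ℝ → ℝ} {I : Set ℝ}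
    (hg : ContDiffOn ℝ n g (univ ×ˢ I)) {t : ℝ} (ht : t ∈ I) : ContDiff ℝ n fun x => g (x, t) :=
  contDiffOn_univ.1 <|
    hg.comp (contDiff_id.prodMk contDiff_const).contDiffOn fun _ _ => ⟨trivial, ht⟩

section Strip

variable {T : ℝ} {φ : ℝ → ℝ → ℝ}

abbrev strip (T : ℝ) : Set (ℝ × ℝ) := univ ×ˢ Icc 0 T

theorem uniqueDiffOn_strip (hT : 0 < T) : UniqueDiffOn ℝ (strip T) :=
  uniqueDiffOn_univ.prod (uniqueDiffOn_Icc hT)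

theorem hasDerivWithinAt_slice_strip (hφ : ContDiffOn ℝ 2 (uncurry φ) (strip T)) (x : ℝ) {t : ℝ}
    (ht : t ∈ Icc 0 T) :
    HasDerivWithinAt (φ x) (partialDerivSnd (strip T) (uncurry φ) (x, t)) (Icc 0 T) t :=
  (hφ.differentiableOn two_ne_zero).hasDerivWithinAt_partialDerivSnd (mem_univ x) ht

theorem hasDerivWithinAt_partialDerivSnd_slice_strip (hT : 0 < T)
    (hφ : ContDiffOn ℝ 2 (uncurry φ) (strip T)) (x : ℝ) {t : ℝ} (ht : t ∈ Icc 0 T) :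
    HasDerivWithinAt (fun s => partialDerivSnd (strip T) (uncurry φ) (x, s))
      (partialDerivSnd (strip T) (partialDerivSnd (strip T) (uncurry φ)) (x, t)) (Icc 0 T) t :=
  ((hφ.partialDerivSnd (n := 1) (uniqueDiffOn_strip hT)).differentiableOn
    one_ne_zero).hasDerivWithinAt_partialDerivSnd (mem_univ x) ht

/-- `∂ₜ²(φ²)` on the closed strip `ℝ × [0, T]`, expanded by the product rule. -/
def stripDttSq (T : ℝ) (φ : ℝ → ℝ → ℝ) (x t : ℝ) : ℝ :=
  2 * partialDerivSnd (strip T) (uncurry φ) (x, t) ^ 2 +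
    2 * φ x t *
      partialDerivSnd (strip T) (partialDerivSnd (strip T) (uncurry φ)) (x, t)

theorem continuousOn_stripDttSq (hT : 0 < T)
    (hφ : ContDiffOn ℝ 2 (uncurry φ) (strip T)) :
    ContinuousOn (uncurry (stripDttSq T φ)) (strip T) := by
  have hP := hφ.partialDerivSnd (n := 1) (uniqueDiffOn_strip hT)
  have hQ := hP.partialDerivSnd (n := 0) (uniqueDiffOn_strip hT)
  have := hP.continuousOn
  have := hQ.continuousOn
  have := hφ.continuousOn
  show ContinuousOn (fun p => 2 * partialDerivSnd (strip T) (uncurry φ) p ^ 2 +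
    2 * uncurry φ p * partialDerivSnd (strip T) (partialDerivSnd (strip T) (uncurry φ)) p) (strip T)
  fun_prop

theorem integral_sq_eq_trapezoid_sub_stripDttSq (hT : 0 < T)
    (hφ : ContDiffOn ℝ 2 (uncurry φ) (strip T)) (x : ℝ) :
    ∫ t in 0..T, φ x t ^ 2 =
      T / 2 * (φ x 0 ^ 2 + φ x T ^ 2) - ∫ t in 0..T, stripDttSq T φ x t * torsion T t := by
  set P := partialDerivSnd (strip T) (uncurry φ)
  have hu := fun t (ht : t ∈ Icc 0 T) => hasDerivWithinAt_slice_strip hφ x ht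
  have hu' := fun t (ht : t ∈ Icc 0 T) => hasDerivWithinAt_partialDerivSnd_slice_strip hT hφ x ht
  refine integral_eq_trapezoid_sub_integral_mul_torsion (w := fun t => φ x t ^ 2)
    (w' := fun t => 2 * φ x t * P (x, t)) (w'' := stripDttSq T φ x) hT.le
    (fun t ht => ((hu t ht).pow 2).congr_deriv (by ring))
    (fun t ht => (((hu t ht).const_mul 2).mul (hu' t ht)).congr_deriv ?_) ?_
  · simp only [stripDttSq]; ring
  · have hslice := (continuousOn_stripDttSq hT hφ).comp
      (Continuous.prodMk_right (Y := ℝ) x).continuousOn fun _ hs => ⟨trivial, hs⟩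
    exact hslice

theorem integral_stripDttSq_nonneg_of_periodic (hT : 0 < T)
    (hφ : ContDiffOn ℝ 2 (uncurry φ) (strip T)) {t c : ℝ} (ht : t ∈ Ioo 0 T) (hc : 0 ≤ c)
    (hper : Periodic (fun y => φ y t) c)
    (hharm : ∀ x, deriv (deriv fun y => φ y t) x + deriv (deriv fun s => φ x s) t = 0) :
    0 ≤ ∫ x in 0..c, stripDttSq T φ x t := by
  set P := partialDerivSnd (strip T) (uncurry φ) with hPdef
  have hP := hφ.partialDerivSnd (n := 1) (uniqueDiffOn_strip hT)
  have hv : ContDiff ℝ 2 fun y => φ y t := hφ.contDiff_comp_prodMk_left (Ioo_subset_Icc_self ht)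
  have hQ : ∀ x, partialDerivSnd (strip T) P (x, t) = -deriv (deriv fun y => φ y t) x := by
    intro x
    rw [← deriv_deriv_eq_of_hasDerivWithinAt_Icc (fun s hs => hasDerivWithinAt_slice_strip hφ x hs)
      (hasDerivWithinAt_partialDerivSnd_slice_strip hT hφ x (Ioo_subset_Icc_self ht)) ht]
    linarith [hharm x]
  have hPt : Continuous fun x => P (x, t) :=
    continuousOn_univ.1 <| hP.continuousOn.comp (Continuous.prodMk_left t).continuousOn
      fun _ _ => ⟨trivial, Ioo_subset_Icc_self ht⟩
  have hvv : Continuous fun x => φ x t * deriv (deriv fun y => φ y t) x :=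
    hv.continuous.mul (hv.iterate_deriv' 0 2).continuous
  calc 0 ≤ 2 * (∫ x in 0..c, P (x, t) ^ 2) -
        2 * ∫ x in 0..c, φ x t * deriv (deriv fun y => φ y t) x := by
        linarith [integral_nonneg (μ := volume) hc fun x _ => sq_nonneg (P (x, t)),
          integral_mul_deriv_deriv_nonpos_of_periodic hper hv hc]
    _ = ∫ x in 0..c, stripDttSq T φ x t := by
      rw [← intervalIntegral.integral_const_mul, ← intervalIntegral.integral_const_mul,
        ← integral_sub (f := fun x => 2 * P (x, t) ^ 2)
          (((hPt.pow 2).const_mul 2).intervalIntegrable _ _)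
          ((hvv.const_mul 2).intervalIntegrable _ _)]
      refine integral_congr fun x _ => ?_
      simp only [stripDttSq, ← hPdef, hQ]
      ring

end Strip

/-- inequality (Eaharm): if `φ` is `C²` on the strip `ℝ × [0, T]`,
harmonic on `ℝ × (0, T)`, and `2π`-periodic in the first variable, then on the flat
cylinder `S¹ × [0, T]` its `L²` norm is controlled by `T/2` times its boundary `L²`
norm:
`∫₀^{2π} ∫₀^T φ² ≤ (T/2)(∫₀^{2π} φ(·,0)² + ∫₀^{2π} φ(·,T)²)`. -/
theorem harmonic_cylinder_L2_bound :
    ∀ T : ℝ, 0 < T →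
      ∀ φ : ℝ → ℝ → ℝ,
        ContDiffOn ℝ 2 (fun p : ℝ × ℝ => φ p.1 p.2) (Set.univ ×ˢ Set.Icc 0 T) →
        (∀ x : ℝ, ∀ t ∈ Set.Ioo 0 T,
          deriv (deriv (fun y : ℝ => φ y t)) x + deriv (deriv (fun s : ℝ => φ x s)) t = 0) →
        (∀ x t : ℝ, φ (x + 2 * π) t = φ x t) →
        (∫ x in (0 : ℝ)..(2 * π), ∫ t in (0 : ℝ)..T, (φ x t) ^ 2) ≤
          T / 2 * ((∫ x in (0 : ℝ)..(2 * π), (φ x 0) ^ 2) +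
            ∫ x in (0 : ℝ)..(2 * π), (φ x T) ^ 2) := by
  intro T hT φ hφ hharm hper
  have hbdry : ∀ s ∈ Icc 0 T, IntervalIntegrable (fun x => φ x s ^ 2) volume 0 (2 * π) :=
    fun s hs => ((hφ.contDiff_comp_prodMk_left hs).continuous.pow 2).intervalIntegrable _ _
  have hR : ContinuousOn (uncurry fun x t => stripDttSq T φ x t * torsion T t)
      ([[0, 2 * π]] ×ˢ [[0, T]]) :=
    ((continuousOn_stripDttSq hT hφ).mul
      ((continuous_torsion T).comp continuous_snd).continuousOn).mono
      (prod_mono (subset_univ _) (uIcc_of_le hT.le).subset)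
  have hrem : 0 ≤ ∫ x in 0..2 * π, ∫ t in 0..T, stripDttSq T φ x t * torsion T t :=
    intervalIntegral_intervalIntegral_nonneg_of_continuousOn hT.le hR fun t ht => by
      rw [intervalIntegral.integral_mul_const]
      exact mul_nonneg (integral_stripDttSq_nonneg_of_periodic hT hφ ht two_pi_pos.le (hper · t)
        (hharm · t ht)) (torsion_nonneg (Ioo_subset_Icc_self ht))
  calc ∫ x in 0..2 * π, ∫ t in 0..T, φ x t ^ 2
      = ∫ x in 0..2 * π, (T / 2 * (φ x 0 ^ 2 + φ x T ^ 2) -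
          ∫ t in 0..T, stripDttSq T φ x t * torsion T t) :=
        integral_congr fun x _ => integral_sq_eq_trapezoid_sub_stripDttSq hT hφ x
    _ = T / 2 * ((∫ x in 0..2 * π, φ x 0 ^ 2) + ∫ x in 0..2 * π, φ x T ^ 2) -
          ∫ x in 0..2 * π, ∫ t in 0..T, stripDttSq T φ x t * torsion T t := by
        have h0 := hbdry 0 (left_mem_Icc.2 hT.le)
        have hT' := hbdry T (right_mem_Icc.2 hT.le)
        rw [integral_sub ((h0.add hT').const_mul _) hR.intervalIntegrable_intervalIntegral,
          intervalIntegral.integral_const_mul, integral_add h0 hT']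
    _ ≤ _ := sub_le_self _ hrem

end
end
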